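/- Let n ≥ 2 and σ ∈ (0,2). Let Γ : ℝ^n → ℝ be bounded and Lebesgue measurable with Γ ≤ 0 everywhere, Γ = 0 outside the closed ball of radius 3 centered at the origin, and Γ < 0 on a set of positive Lebesgue measure. Let P := Γ * K_{2−σ}. Then P is twice continuously differentiable on the set {x : |x| > 3}, and for every x₀ with |x₀| > 3 one has ΔP(x₀) < 0; consequently, for every affine function ℓ : ℝ^n → ℝ, the function P − ℓ does not attain a local minimum at x₀. -/

import Mathlib

open MeasureTheory

noncomputable section

/-- The constant `A(n,α) = π^{α - n/2} Γ((n-α)/2) / Γ(α/2)`. -/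
def rieszA (n : ℕ) (α : ℝ) : ℝ :=
  Real.pi ^ (α - (n : ℝ) / 2) * Real.Gamma (((n : ℝ) - α) / 2) / Real.Gamma (α / 2)

/-- The Riesz kernel of order `2 - σ`: `K_{2-σ}(y) = A(n,2-σ)·|y|^{-n+2-σ}`. -/
def rieszKernel (n : ℕ) (σ : ℝ) (y : EuclideanSpace ℝ (Fin n)) : ℝ :=
  rieszA n (2 - σ) * ‖y‖ ^ (-(n : ℝ) + 2 - σ)

/-- The Riesz potential `P = Γ * K_{2-σ}` (convolution over `ℝⁿ`). -/
def rieszPotential (n : ℕ) (σ : ℝ) (Γ : EuclideanSpace ℝ (Fin n) → ℝ)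
    (x : EuclideanSpace ℝ (Fin n)) : ℝ :=
  ∫ y : EuclideanSpace ℝ (Fin n), Γ y * rieszKernel n σ (x - y)

/-- The Laplacian `ΔP(x)`, i.e. the trace of the second derivative of `P` at `x`. -/
def laplacianAt {n : ℕ} (P : EuclideanSpace ℝ (Fin n) → ℝ)
    (x : EuclideanSpace ℝ (Fin n)) : ℝ :=
  ∑ i, iteratedFDeriv ℝ 2 P x ![EuclideanSpace.single i 1, EuclideanSpace.single i 1]

/-!
Near a point `x₀` with `‖x₀‖ > 3`, the kernel is only evaluated on an annulus avoiding its
singularity, so there the potential coincides with `Γ ⋆ g` for a smooth compactly supported `g`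
equal to the kernel on that annulus. Hence `P` is smooth near `x₀` and
`ΔP(x₀) = ∫ Γ(y) ΔK(x₀ - y) dy`. Since `Δ‖z‖^p = p (n + p - 2) ‖z‖^(p - 2)` and `p = 2 - n - σ`
gives `p (n + p - 2) = σ (n - 2 + σ) > 0`, the kernel is strictly subharmonic off the origin, so
`Γ ≤ 0` with `Γ < 0` on a set of positive measure makes the integral negative. At a local minimum
of `P - ℓ` all second directional derivatives, hence the Laplacian, would be nonnegative, while
`Δℓ = 0`.
-/

open Filter Topology Laplacian InnerProductSpace
open scoped Convolution

theorem IsLocalMin.deriv_deriv_nonneg {f : ℝ → ℝ} {a : ℝ} (h : IsLocalMin f a)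
    (hf : ContinuousAt f a) : 0 ≤ deriv (deriv f) a := by
  -- otherwise the second derivative test makes `a` a local maximum too, so `f` is locally constant
  by_contra! hneg
  have hconst : f =ᶠ[𝓝 a] fun _ => f a :=
    (Filter.Eventually.and h (isLocalMax_of_deriv_deriv_neg hneg h.deriv_eq_zero hf)).mono
      fun _ hx => le_antisymm hx.2 hx.1
  have : deriv f =ᶠ[𝓝 a] fun _ => 0 := by
    filter_upwards [hconst.eventuallyEq_nhds] with x hx
    rw [hx.deriv_eq, deriv_const]
  rw [this.deriv_eq, deriv_const] at hneg
  exact hneg.false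

theorem IsLocalMin.fderiv_fderiv_apply_self_nonneg {E : Type*} [NormedAddCommGroup E]
    [NormedSpace ℝ E] {f : E → ℝ} {a : E} (h : IsLocalMin f a) (hf : ContDiffAt ℝ 2 f a) (v : E) :
    0 ≤ fderiv ℝ (fderiv ℝ f) a v v := by
  set line : ℝ → E := fun t => a + t • v
  have hline : ∀ t, HasDerivAt line v t := fun t => by
    simpa only [id, one_smul] using ((hasDerivAt_id t).smul_const v).const_add a
  have hline0 : line 0 = a := by simp [line]
  rw [← hline0] at h hf ⊢
  have hderiv : deriv (f ∘ line) =ᶠ[𝓝 0] fun t => fderiv ℝ f (line t) v := by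
    filter_upwards [(hline 0).continuousAt.eventually
      (hf.eventually (by simp) |>.mono fun _ hx => hx.differentiableAt (by simp))] with t ht
    exact (ht.hasFDerivAt.comp_hasDerivAt t (hline t)).deriv
  have hf' : HasFDerivAt (fderiv ℝ f) (fderiv ℝ (fderiv ℝ f) (line 0)) (line 0) :=
    ((hf.fderiv_right (m := 1) (by norm_num)).differentiableAt (by simp)).hasFDerivAt
  have hsecond : HasDerivAt (fun t => fderiv ℝ f (line t) v)
      (fderiv ℝ (fderiv ℝ f) (line 0) v v) 0 :=
    ((ContinuousLinearMap.apply ℝ ℝ v).hasFDerivAt.comp _ hf').comp_hasDerivAt 0 (hline 0)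
  rw [← hsecond.deriv, ← hderiv.deriv_eq]
  exact (h.comp_continuous (hline 0).continuousAt).deriv_deriv_nonneg
    (hf.continuousAt.comp (hline 0).continuousAt)

section Laplacian

variable {E F : Type*} [NormedAddCommGroup E] [InnerProductSpace ℝ E] [FiniteDimensional ℝ E]
  [NormedAddCommGroup F] [NormedSpace ℝ F]

theorem laplacian_eq_sum_fderiv_fderiv (f : E → F) :
    Δ f = fun x => ∑ i, fderiv ℝ (fderiv ℝ f) x (stdOrthonormalBasis ℝ E i)
      (stdOrthonormalBasis ℝ E i) := by
  simp [laplacian_eq_iteratedFDeriv_stdOrthonormalBasis, iteratedFDeriv_two_apply]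

theorem ContDiff.continuous_laplacian {f : E → F} (hf : ContDiff ℝ 2 f) : Continuous (Δ f) := by
  have hf2 : Continuous (fderiv ℝ (fderiv ℝ f)) :=
    (hf.fderiv_right (m := 1) (by norm_num)).continuous_fderiv one_ne_zero
  rw [laplacian_eq_sum_fderiv_fderiv]
  fun_prop

theorem HasCompactSupport.laplacian {f : E → F} (hf : HasCompactSupport f) :
    HasCompactSupport (Δ f) := by
  rw [laplacian_eq_sum_fderiv_fderiv]
  exact ((hf.fderiv ℝ).fderiv ℝ).comp_left
    (g := fun T : E →L[ℝ] E →L[ℝ] F => ∑ i, T (stdOrthonormalBasis ℝ E i)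
      (stdOrthonormalBasis ℝ E i)) (by simp)

theorem IsLocalMin.laplacian_nonneg {f : E → ℝ} {a : E} (h : IsLocalMin f a)
    (hf : ContDiffAt ℝ 2 f a) : 0 ≤ Δ f a := by
  simp only [laplacian_eq_sum_fderiv_fderiv]
  exact Finset.sum_nonneg fun i _ => h.fderiv_fderiv_apply_self_nonneg hf _

theorem AffineMap.laplacian_eq_zero (ℓ : E →ᵃ[ℝ] F) : Δ ⇑ℓ = 0 := by
  have hℓ : ⇑ℓ = fun z => LinearMap.toContinuousLinearMap ℓ.linear z + ℓ 0 := by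
    ext z
    simpa using congrFun ℓ.decomp z
  have hfderiv : fderiv ℝ ℓ = fun _ => LinearMap.toContinuousLinearMap ℓ.linear := by
    ext1 z
    rw [hℓ, fderiv_add_const, ContinuousLinearMap.fderiv]
  ext x
  simp [laplacian_eq_sum_fderiv_fderiv, hfderiv]

end Laplacian

theorem laplacianAt_eq_laplacian {n : ℕ} (f : EuclideanSpace ℝ (Fin n) → ℝ)
    (x : EuclideanSpace ℝ (Fin n)) : laplacianAt f x = Δ f x := by
  simp [laplacianAt, laplacian_eq_iteratedFDeriv_orthonormalBasis f (EuclideanSpace.basisFun _ ℝ)]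

theorem Real.rpow_eq_sq_rpow_half {a : ℝ} (ha : 0 ≤ a) (p : ℝ) : a ^ p = (a ^ 2) ^ (p / 2) := by
  rw [← Real.rpow_natCast, ← Real.rpow_mul ha]
  congr 1
  ring

section NormRpow

variable {E : Type*} [NormedAddCommGroup E] [InnerProductSpace ℝ E] {x : E}

theorem hasFDerivAt_norm_rpow_of_ne_zero (p : ℝ) (hx : x ≠ 0) :
    HasFDerivAt (fun z : E => ‖z‖ ^ p) ((p * ‖x‖ ^ (p - 2)) • innerSL ℝ x) x := by
  have hsq : ‖x‖ ^ 2 ≠ 0 := pow_ne_zero _ (norm_ne_zero_iff.2 hx)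
  have h := (Real.hasDerivAt_rpow_const (p := p / 2) (Or.inl hsq)).comp_hasFDerivAt x
    (hasStrictFDerivAt_norm_sq x).hasFDerivAt
  refine (h.congr_of_eventuallyEq (.of_forall fun z =>
    Real.rpow_eq_sq_rpow_half (norm_nonneg z) p)).congr_fderiv ?_
  ext v
  rw [show p / 2 - 1 = (p - 2) / 2 by ring, ← Real.rpow_eq_sq_rpow_half (norm_nonneg x)]
  simp only [smul_apply, innerSL_apply_apply, smul_eq_mul, nsmul_eq_mul]
  ring

theorem contDiffAt_norm_rpow_of_ne_zero {k : WithTop ℕ∞} (p : ℝ) (hx : x ≠ 0) :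
    ContDiffAt ℝ k (fun z : E => ‖z‖ ^ p) x :=
  (Real.contDiffAt_rpow_const_of_ne (norm_ne_zero_iff.2 hx)).comp x (contDiffAt_norm ℝ hx)

theorem fderiv_fderiv_norm_rpow_apply (p : ℝ) (hx : x ≠ 0) (v w : E) :
    fderiv ℝ (fderiv ℝ fun z : E => ‖z‖ ^ p) x v w =
      p * ‖x‖ ^ (p - 2) * inner ℝ v w +
        p * (p - 2) * ‖x‖ ^ (p - 4) * inner ℝ x v * inner ℝ x w := by
  have hfderiv : fderiv ℝ (fun z : E => ‖z‖ ^ p) =ᶠ[𝓝 x]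
      fun z => (p * ‖z‖ ^ (p - 2)) • innerSL ℝ z := by
    filter_upwards [isOpen_ne.mem_nhds hx] with z hz
    exact (hasFDerivAt_norm_rpow_of_ne_zero p hz).fderiv
  have hcoeff : HasFDerivAt (fun z : E => p * ‖z‖ ^ (p - 2))
      ((p * ((p - 2) * ‖x‖ ^ (p - 4))) • innerSL ℝ x) x := by
    have h := (hasFDerivAt_norm_rpow_of_ne_zero (p - 2) hx).const_mul p
    rwa [smul_smul, show p - 2 - 2 = p - 4 by ring] at h
  have hsecond : HasFDerivAt (fun z => (p * ‖z‖ ^ (p - 2)) • innerSL ℝ z) _ x :=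
    hcoeff.smul (innerSL ℝ (E := E)).hasFDerivAt
  rw [hfderiv.fderiv_eq, hsecond.fderiv]
  simp only [add_apply, smul_apply, ContinuousLinearMap.smulRight_apply, innerSL_apply_apply,
    smul_eq_mul]
  erw [innerSL_apply_apply]
  ring

variable [FiniteDimensional ℝ E]

theorem laplacian_norm_rpow (p : ℝ) (hx : x ≠ 0) :
    Δ (fun z : E => ‖z‖ ^ p) x = p * (Module.finrank ℝ E + p - 2) * ‖x‖ ^ (p - 2) := by
  set b := stdOrthonormalBasis ℝ E
  have hparseval : ∑ i, inner ℝ x (b i) * inner ℝ x (b i) = ‖x‖ ^ 2 := by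
    rw [← real_inner_self_eq_norm_sq, ← b.sum_inner_mul_inner x x]
    exact Finset.sum_congr rfl fun i _ => by rw [real_inner_comm (b i) x]
  have hpow : ‖x‖ ^ (p - 4) * ‖x‖ ^ 2 = ‖x‖ ^ (p - 2) := by
    rw [← Real.rpow_natCast, ← Real.rpow_add (norm_pos_iff.2 hx)]
    congr 1
    push_cast
    ring
  have hterm : ∀ i, fderiv ℝ (fderiv ℝ fun z : E => ‖z‖ ^ p) x (b i) (b i) =
      p * ‖x‖ ^ (p - 2) + p * (p - 2) * ‖x‖ ^ (p - 4) * (inner ℝ x (b i) * inner ℝ x (b i)) := by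
    intro i
    rw [fderiv_fderiv_norm_rpow_apply p hx, real_inner_self_eq_norm_sq, b.norm_eq_one]
    ring
  simp only [laplacian_eq_sum_fderiv_fderiv]
  rw [Finset.sum_congr rfl fun i _ => hterm i,
    Finset.sum_add_distrib, Finset.sum_const, ← Finset.mul_sum, hparseval, Finset.card_univ,
    Fintype.card_fin, nsmul_eq_mul, mul_assoc _ (‖x‖ ^ (p - 4)), hpow]
  ring

end NormRpow

section Convolution

variable {𝕜 G E E' F : Type*} [RCLike 𝕜] [NormedAddCommGroup G] [NormedSpace 𝕜 G]
  [MeasurableSpace G] [BorelSpace G] {μ : Measure G} [SFinite μ] [μ.IsAddLeftInvariant]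
  [NormedAddCommGroup E] [NormedSpace 𝕜 E] [NormedAddCommGroup E'] [NormedSpace 𝕜 E']
  [NormedAddCommGroup F] [NormedSpace ℝ F] [NormedSpace 𝕜 F]
  (L : E →L[𝕜] E' →L[𝕜] F) {f : G → E} {g : G → E'}

theorem HasCompactSupport.fderiv_fderiv_convolution_right_apply (hcg : HasCompactSupport g)
    (hf : LocallyIntegrable f μ) (hg : ContDiff 𝕜 2 g) (x v w : G) :
    fderiv 𝕜 (fderiv 𝕜 (f ⋆[L, μ] g)) x v w =
      (f ⋆[L, μ] fun z => fderiv 𝕜 (fderiv 𝕜 g) z v w) x := by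
  have hg1 : ContDiff 𝕜 1 (fderiv 𝕜 g) := hg.fderiv_right (by norm_num)
  have hg2 : Continuous (fderiv 𝕜 (fderiv 𝕜 g)) := hg1.continuous_fderiv one_ne_zero
  have hcg2 : HasCompactSupport (fderiv 𝕜 (fderiv 𝕜 g)) := (hcg.fderiv 𝕜).fderiv 𝕜
  have hcg2v : HasCompactSupport fun z => fderiv 𝕜 (fderiv 𝕜 g) z v :=
    hcg2.comp_left (g := fun T : G →L[𝕜] G →L[𝕜] E' => T v) rfl
  have hfirst : fderiv 𝕜 (f ⋆[L, μ] g) = f ⋆[L.precompR G, μ] fderiv 𝕜 g :=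
    funext fun y => (hcg.hasFDerivAt_convolution_right L hf (hg.of_le one_le_two) y).fderiv
  rw [hfirst, ((hcg.fderiv 𝕜).hasFDerivAt_convolution_right _ hf hg1 x).fderiv,
    convolution_precompR_apply _ hf hcg2 hg2,
    convolution_precompR_apply _ hf hcg2v ((ContinuousLinearMap.apply 𝕜 _ v).continuous.comp hg2)]

end Convolution

section LaplacianConvolution

variable {E F₁ F₂ F₃ : Type*} [NormedAddCommGroup E] [InnerProductSpace ℝ E]
  [FiniteDimensional ℝ E] [MeasurableSpace E] [BorelSpace E] {μ : Measure E} [SFinite μ]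
  [μ.IsAddLeftInvariant] [NormedAddCommGroup F₁] [NormedSpace ℝ F₁] [NormedAddCommGroup F₂]
  [NormedSpace ℝ F₂] [NormedAddCommGroup F₃] [NormedSpace ℝ F₃]
  (L : F₁ →L[ℝ] F₂ →L[ℝ] F₃) {f : E → F₁} {g : E → F₂}

theorem HasCompactSupport.laplacian_convolution_right (hcg : HasCompactSupport g)
    (hf : LocallyIntegrable f μ) (hg : ContDiff ℝ 2 g) (x : E) :
    Δ (f ⋆[L, μ] g) x = (f ⋆[L, μ] Δ g) x := by
  set b := stdOrthonormalBasis ℝ E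
  have hg2 : Continuous (fderiv ℝ (fderiv ℝ g)) :=
    (hg.fderiv_right (m := 1) (by norm_num)).continuous_fderiv one_ne_zero
  have hexists : ∀ i, ConvolutionExistsAt f (fun z => fderiv ℝ (fderiv ℝ g) z (b i) (b i)) x L μ :=
    fun i => HasCompactSupport.convolutionExists_right L
      (((hcg.fderiv ℝ).fderiv ℝ).comp_left (g := fun T : E →L[ℝ] E →L[ℝ] F₂ => T (b i) (b i))
        (by simp)) hf (by fun_prop) x
  rw [laplacian_eq_sum_fderiv_fderiv, laplacian_eq_sum_fderiv_fderiv]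
  simp only [hcg.fderiv_fderiv_convolution_right_apply L hf hg, convolution_def, map_sum]
  exact (integral_finsetSum _ fun i _ => hexists i).symm

end LaplacianConvolution

theorem exists_contDiff_hasCompactSupport_eq_of_le_norm_le {E : Type*} [NormedAddCommGroup E]
    [NormedSpace ℝ E] [FiniteDimensional ℝ E] {k : ℕ∞} {f : E → ℝ}
    (hf : ∀ z ≠ 0, ContDiffAt ℝ k f z) {r : ℝ} (hr : 0 < r) (s : ℝ) :
    ∃ g : E → ℝ, ContDiff ℝ k g ∧ HasCompactSupport g ∧ ∀ z, r ≤ ‖z‖ → ‖z‖ ≤ s → g z = f z := by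
  let bumpIn : ContDiffBump (0 : E) := ⟨r / 2, r, half_pos hr, half_lt_self hr⟩
  let bumpOut : ContDiffBump (0 : E) := ⟨max r s, max r s + 1, lt_max_of_lt_left hr, lt_add_one _⟩
  refine ⟨fun z => bumpOut z * ((1 - bumpIn z) * f z), ?_, bumpOut.hasCompactSupport.mul_right, ?_⟩
  · refine contDiff_iff_contDiffAt.2 fun z => ?_
    rcases lt_or_ge ‖z‖ (r / 2) with hz | hz
    · refine contDiffAt_const (c := (0 : ℝ)) |>.congr_of_eventuallyEq ?_
      filter_upwards [Metric.isOpen_ball.mem_nhds (mem_ball_zero_iff.2 hz)] with w hw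
      simp [bumpIn.one_of_mem_closedBall (Metric.ball_subset_closedBall hw)]
    · have hz0 : z ≠ 0 := by
        rintro rfl
        exact (half_pos hr).not_ge (by simpa using hz)
      exact bumpOut.contDiffAt.mul ((contDiffAt_const.sub bumpIn.contDiffAt).mul (hf z hz0))
  · intro z hrz hzs
    have hbumpIn : bumpIn z = 0 := bumpIn.zero_of_le_dist (by simpa using hrz)
    have hbumpOut : bumpOut z = 1 :=
      bumpOut.one_of_mem_closedBall (mem_closedBall_zero_iff.2 (hzs.trans (le_max_right r s)))
    simp [hbumpIn, hbumpOut]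

theorem integral_mul_sub_eventuallyEq_convolution {E : Type*} [NormedAddCommGroup E]
    [MeasurableSpace E] {μ : Measure E} {Γ K g : E → ℝ} {R r s : ℝ}
    (hΓ : ∀ y, y ∉ Metric.closedBall 0 R → Γ y = 0) (hgK : ∀ z, r ≤ ‖z‖ → ‖z‖ ≤ s → g z = K z)
    {x₀ : E} (hr : R + r < ‖x₀‖) (hs : ‖x₀‖ + R < s) :
    (fun x => ∫ y, Γ y * K (x - y) ∂μ) =ᶠ[𝓝 x₀] Γ ⋆[ContinuousLinearMap.lsmul ℝ ℝ, μ] g := by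
  have hδ : 0 < min (‖x₀‖ - R - r) (s - ‖x₀‖ - R) := lt_min (by linarith) (by linarith)
  filter_upwards [Metric.ball_mem_nhds x₀ hδ] with x hx
  rw [convolution_def]
  refine integral_congr_ae (.of_forall fun y => ?_)
  by_cases hy : y ∈ Metric.closedBall 0 R
  · rw [mem_closedBall_zero_iff] at hy
    rw [Metric.mem_ball, dist_eq_norm, lt_min_iff] at hx
    have h₁ := norm_sub_norm_le x₀ y
    have h₂ := norm_sub_le_norm_sub_add_norm_sub x₀ x y
    have h₃ := norm_sub_le x y
    have h₄ := norm_sub_norm_le x x₀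
    rw [norm_sub_rev x₀ x] at h₂
    simp only [ContinuousLinearMap.lsmul_apply, smul_eq_mul]
    rw [hgK _ (by linarith) (by linarith)]
  · simp [hΓ y hy]

theorem integral_mul_neg_of_nonpos {α : Type*} [MeasurableSpace α] {μ : Measure α}
    {Γ h : α → ℝ} (hΓ : ∀ y, Γ y ≤ 0) (hpos : 0 < μ {y | Γ y < 0})
    (hh : ∀ y, Γ y < 0 → 0 < h y) (hint : Integrable (fun y => Γ y * h y) μ) :
    ∫ y, Γ y * h y ∂μ < 0 := by
  have hnonneg : 0 ≤ fun y => -(Γ y * h y) := fun y => by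
    rcases (hΓ y).lt_or_eq with hy | hy
    · exact (neg_pos.2 (mul_neg_of_neg_of_pos hy (hh y hy))).le
    · simp [hy]
  have hsupp : {y | Γ y < 0} ⊆ Function.support fun y => -(Γ y * h y) := fun y hy =>
    (neg_pos.2 (mul_neg_of_neg_of_pos hy (hh y hy))).ne'
  have := (integral_pos_iff_support_of_nonneg hnonneg hint.neg).2
    (hpos.trans_le (measure_mono hsupp))
  rw [integral_neg] at this
  linarith

section Riesz

variable {n : ℕ} {σ : ℝ}

theorem rieszA_pos {α : ℝ} (h0 : 0 < α) (hn : α < n) : 0 < rieszA n α :=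
  div_pos (mul_pos (Real.rpow_pos_of_pos Real.pi_pos _) (Real.Gamma_pos_of_pos (by linarith)))
    (Real.Gamma_pos_of_pos (by linarith))

theorem contDiffAt_rieszKernel {k : WithTop ℕ∞} {z : EuclideanSpace ℝ (Fin n)} (hz : z ≠ 0) :
    ContDiffAt ℝ k (rieszKernel n σ) z :=
  contDiffAt_const.mul (contDiffAt_norm_rpow_of_ne_zero _ hz)

theorem laplacian_rieszKernel {z : EuclideanSpace ℝ (Fin n)} (hz : z ≠ 0) :
    Δ (rieszKernel n σ) z = rieszA n (2 - σ) * (σ * (n - 2 + σ)) * ‖z‖ ^ (-(n : ℝ) - σ) := by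
  have hK : rieszKernel n σ = rieszA n (2 - σ) • fun y => ‖y‖ ^ (-(n : ℝ) + 2 - σ) := rfl
  rw [hK, laplacian_smul _ (contDiffAt_norm_rpow_of_ne_zero _ hz), laplacian_norm_rpow _ hz,
    finrank_euclideanSpace_fin, smul_eq_mul, show -(n : ℝ) + 2 - σ - 2 = -n - σ by ring]
  ring

theorem laplacian_rieszKernel_pos (hσ : σ ∈ Set.Ioo (0 : ℝ) 2) (hn : 2 - σ < n)
    {z : EuclideanSpace ℝ (Fin n)} (hz : z ≠ 0) : 0 < Δ (rieszKernel n σ) z := by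
  rw [laplacian_rieszKernel hz]
  have hA := rieszA_pos (sub_pos.2 hσ.2) hn
  have hσ₀ := hσ.1
  have hσn : 0 < (n : ℝ) - 2 + σ := by linarith
  positivity

end Riesz

theorem exists_hasCompactSupport_convolution_eventuallyEq {E : Type*} [NormedAddCommGroup E]
    [InnerProductSpace ℝ E] [FiniteDimensional ℝ E] [MeasurableSpace E] {μ : Measure E}
    {Γ K : E → ℝ} (hK : ∀ z ≠ 0, ContDiffAt ℝ 2 K z) {R : ℝ}
    (hΓ : ∀ y, y ∉ Metric.closedBall 0 R → Γ y = 0) {x₀ : E} (hx₀ : R < ‖x₀‖) :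
    ∃ g : E → ℝ, ContDiff ℝ 2 g ∧ HasCompactSupport g ∧
      (∀ y, ‖y‖ ≤ R → Δ g (x₀ - y) = Δ K (x₀ - y)) ∧
      (fun x => ∫ y, Γ y * K (x - y) ∂μ) =ᶠ[𝓝 x₀] Γ ⋆[ContinuousLinearMap.lsmul ℝ ℝ, μ] g := by
  set r := (‖x₀‖ - R) / 2
  obtain ⟨g, hg, hcg, hgK⟩ := exists_contDiff_hasCompactSupport_eq_of_le_norm_le (k := 2) hK
    (show 0 < r by simp only [r]; linarith) (‖x₀‖ + R + 1)
  refine ⟨g, hg, hcg, fun y hy => ?_,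
    integral_mul_sub_eventuallyEq_convolution hΓ hgK (by simp only [r]; linarith) (by linarith)⟩
  have hannulus : IsOpen {z : E | r < ‖z‖ ∧ ‖z‖ < ‖x₀‖ + R + 1} :=
    (isOpen_lt continuous_const continuous_norm).inter (isOpen_lt continuous_norm continuous_const)
  have h₁ := norm_sub_norm_le x₀ y
  have h₂ := norm_sub_le x₀ y
  refine (laplacian_congr_nhds ?_).eq_of_nhds
  filter_upwards [hannulus.mem_nhds ⟨by simp only [r]; linarith, by linarith⟩] with z hz
  exact hgK z hz.1.le hz.2.le

theorem exists_contDiff_eventuallyEq_rieszPotential_laplacian_neg {n : ℕ} {σ : ℝ}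
    (hσ : σ ∈ Set.Ioo (0 : ℝ) 2) (hn : 2 - σ < n) {Γ : EuclideanSpace ℝ (Fin n) → ℝ}
    (hΓ : LocallyIntegrable Γ volume) (hneg : ∀ z, Γ z ≤ 0) {R : ℝ}
    (hsupp : ∀ z, z ∉ Metric.closedBall 0 R → Γ z = 0) (hpos : 0 < volume {z | Γ z < 0})
    {x₀ : EuclideanSpace ℝ (Fin n)} (hx₀ : R < ‖x₀‖) :
    ∃ Q, ContDiff ℝ 2 Q ∧ rieszPotential n σ Γ =ᶠ[𝓝 x₀] Q ∧ Δ Q x₀ < 0 := by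
  obtain ⟨g, hg, hcg, hΔg, hPg⟩ := exists_hasCompactSupport_convolution_eventuallyEq
    (μ := volume) (fun z hz => contDiffAt_rieszKernel (σ := σ) hz) hsupp hx₀
  refine ⟨_, hcg.contDiff_convolution_right _ hΓ hg, hPg, ?_⟩
  rw [hcg.laplacian_convolution_right (ContinuousLinearMap.lsmul ℝ ℝ) hΓ hg, convolution_def]
  simp only [ContinuousLinearMap.lsmul_apply, smul_eq_mul]
  refine integral_mul_neg_of_nonpos hneg hpos (fun y hy => ?_) ?_
  · have hyR : ‖y‖ ≤ R := by
      by_contra h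
      exact hy.ne (hsupp y (by simpa using h))
    rw [hΔg y hyR]
    refine laplacian_rieszKernel_pos hσ hn (sub_ne_zero.2 ?_)
    rintro rfl
    exact hyR.not_gt hx₀
  · simpa using (hcg.laplacian.convolutionExists_right (ContinuousLinearMap.lsmul ℝ ℝ) hΓ
      hg.continuous_laplacian x₀).integrable

/-- `P` is `C²` outside the closed ball of radius 3, `ΔP < 0` there, and
hence `P - ℓ` has no local minimum outside the closed ball for any affine `ℓ`. -/
theorem stmt1 (n : ℕ) (hn : 2 ≤ n) (σ : ℝ) (hσ : σ ∈ Set.Ioo (0 : ℝ) 2)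
    (Γ : EuclideanSpace ℝ (Fin n) → ℝ)
    (hb : ∃ C : ℝ, ∀ z, |Γ z| ≤ C) (hm : Measurable Γ)
    (hneg : ∀ z, Γ z ≤ 0)
    (hsupp : ∀ z : EuclideanSpace ℝ (Fin n), z ∉ Metric.closedBall 0 3 → Γ z = 0)
    (hpos : 0 < volume {z : EuclideanSpace ℝ (Fin n) | Γ z < 0})
    (P : EuclideanSpace ℝ (Fin n) → ℝ) (hP : P = rieszPotential n σ Γ) :
    ContDiffOn ℝ 2 P {x : EuclideanSpace ℝ (Fin n) | 3 < ‖x‖} ∧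
    ∀ x₀ : EuclideanSpace ℝ (Fin n), 3 < ‖x₀‖ →
      laplacianAt P x₀ < 0 ∧
      ∀ ℓ : EuclideanSpace ℝ (Fin n) →ᵃ[ℝ] ℝ,
        ¬ IsLocalMin (fun z => P z - ℓ z) x₀ := by
  obtain ⟨C, hC⟩ := hb
  have hΓ : LocallyIntegrable Γ volume :=
    ((Measure.integrableOn_of_bounded measure_closedBall_lt_top.ne hm.aestronglyMeasurable
      (ae_of_all _ hC)).integrable_of_forall_notMem_eq_zero hsupp).locallyIntegrable
  have hσn : 2 - σ < n := by
    have : (2 : ℝ) ≤ n := by exact_mod_cast hn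
    linarith [hσ.1]
  have hlocal := fun x₀ (hx₀ : 3 < ‖x₀‖) =>
    exists_contDiff_eventuallyEq_rieszPotential_laplacian_neg hσ hσn hΓ hneg hsupp hpos hx₀
  subst hP
  refine ⟨fun x hx => ?_, fun x₀ hx₀ => ?_⟩
  · obtain ⟨Q, hQ, hPQ, -⟩ := hlocal x hx
    exact (hQ.contDiffAt.congr_of_eventuallyEq hPQ).contDiffWithinAt
  obtain ⟨Q, hQ, hPQ, hΔQ⟩ := hlocal x₀ hx₀
  have hP : ContDiffAt ℝ 2 (rieszPotential n σ Γ) x₀ := hQ.contDiffAt.congr_of_eventuallyEq hPQ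
  have hΔP : Δ (rieszPotential n σ Γ) x₀ < 0 := by rwa [(laplacian_congr_nhds hPQ).eq_of_nhds]
  refine ⟨by rwa [laplacianAt_eq_laplacian], fun ℓ hmin => hΔP.not_ge ?_⟩
  have hℓ : ContDiffAt ℝ 2 ℓ x₀ :=
    (ContinuousAffineMap.contDiff ⟨ℓ, ℓ.continuous_of_finiteDimensional⟩).contDiffAt
  have : 0 ≤ Δ (rieszPotential n σ Γ - ℓ) x₀ := hmin.laplacian_nonneg (hP.sub hℓ)
  rwa [hP.laplacian_sub hℓ, ℓ.laplacian_eq_zero, Pi.zero_apply, sub_zero] at this
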